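/- arXiv:1603.01807 — 4 statements merged into one kernel-verified Lean document; each statement's English description precedes it below -/
import Mathlib

section
/- If a sequence a : ℕ → ℤ satisfies a(n) = 2·a(n-1) - a(n-3) for all n ≥ 4, with a(2) = 4, a(3) = 7, a(4) = 12, then a(n) = a(n-1) + a(n-2) + 1 for all n ≥ 4. -/
/-! Since `x³ - 2x² + 1 = (x - 1)(x² - x - 1)`, the recurrence says exactly that the Fibonacci
defect `a n - a (n - 1) - a (n - 2)` does not change with `n`; at `n = 4` it is `12 - 7 - 4 = 1`. -/

theorem sub_sub_eq_of_eq_two_nsmul_sub {G : Type*} [AddCommGroup G] (a : ℕ → G)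
    (h : ∀ n, a (n + 3) = 2 • a (n + 2) - a n) (n : ℕ) :
    a (n + 2) - a (n + 1) - a n = a 2 - a 1 - a 0 := by
  induction n with
  | zero => rfl
  | succ n ih =>
    rw [← ih, h n, two_nsmul]
    abel

theorem stmt_1 (a : ℕ → ℤ)
    (hrec : ∀ n, 4 ≤ n → a n = 2 * a (n - 1) - a (n - 3))
    (h2 : a 2 = 4) (h3 : a 3 = 7) (h4 : a 4 = 12) :
    ∀ n, 4 ≤ n → a n = a (n - 1) + a (n - 2) + 1 := by
  intro n hn
  obtain ⟨m, rfl⟩ := Nat.exists_eq_add_of_le' hn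
  have hshift : ∀ k, a (k + 2 + 3) = 2 • a (k + 2 + 2) - a (k + 2) := fun k => by
    simpa using hrec (k + 5) (by omega)
  have hdefect := sub_sub_eq_of_eq_two_nsmul_sub (fun k => a (k + 2)) hshift m
  simp only [h2, h3, h4] at hdefect
  rw [show m + 4 - 1 = m + 3 by omega, show m + 4 - 2 = m + 2 by omega]
  linarith
end

section
/- Let a : ℕ → ℤ satisfy a(2) = 4, a(3) = 7, and a(n) = a(n-1) + a(n-2) + 1 for n ≥ 4, and define c : ℕ → ℤ by c(2) = 7 and c(n) = c(n-1) + a(n) for n ≥ 3. Then c(n) = a(n+2) - (n+3) for all n ≥ 2. -/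
theorem stmt_2 (a c : ℕ → ℤ)
    (ha2 : a 2 = 4) (ha3 : a 3 = 7)
    (harec : ∀ n, 4 ≤ n → a n = a (n - 1) + a (n - 2) + 1)
    (hc2 : c 2 = 7)
    (hcrec : ∀ n, 3 ≤ n → c n = c (n - 1) + a n) :
    ∀ n, 2 ≤ n → c n = a (n + 2) - (n + 3) := by
  have ha : ∀ n, 2 ≤ n → a (n + 2) = a (n + 1) + a n + 1 := fun n hn => by
    simpa using harec (n + 2) (by omega)
  have hc : ∀ n, 2 ≤ n → c (n + 1) = c n + a (n + 1) := fun n hn => by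
    simpa using hcrec (n + 1) (by omega)
  intro n hn
  induction n, hn using Nat.le_induction with
  | base =>
    have ha4 : a 4 = 12 := by rw [ha 2 le_rfl, ha3, ha2]; rfl
    rw [hc2, ha4]; rfl
  | succ m hm ih =>
    -- `a (m + 3) - a (m + 2) - 1 = a (m + 1)` is exactly the recurrence for `a`.
    rw [hc m hm, ih, ha (m + 1) (by omega)]
    push_cast
    ring
end

section
/- In any graph G consisting of a Hamiltonian cycle H on vertices v_0, ..., v_{n-1} together with a set S of additional chords (spokes), every nonempty subset F ⊆ S is the chord-set of at most two cycles of G; that is, there are at most two cycles C of G such that the set of chords of S contained in C is exactly F. -/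
/-! Two cycles with the same spokes agree off `H`, so their symmetric difference `D` consists of
edges of `H`. Every vertex meets an even number of edges of each cycle, hence of `D`; as it meets
only two edges of `H`, `D` contains both or neither of them, and walking around `H` shows that `D`
is empty or all of `H`. Hence every cycle with spoke set `F` other than a fixed one `C` is the
symmetric difference of `C` with `H`, which leaves room for at most two. -/

open Finset
open scoped symmDiff

theorem Finset.card_symmDiff_add_two_mul_card_inter {α : Type*} [DecidableEq α] (s t : Finset α) :
    #(s ∆ t) + 2 * #(s ∩ t) = #s + #t := by
  rw [symmDiff_eq_sup_sdiff_inf, sup_eq_union, inf_eq_inter,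
    card_sdiff_of_subset inter_subset_union, ← card_union_add_card_inter s t]
  have := card_le_card (inter_subset_union (s := s) (t := t))
  omega

theorem Finset.even_card_symmDiff {α : Type*} [DecidableEq α] {s t : Finset α}
    (hs : Even #s) (ht : Even #t) : Even #(s ∆ t) := by
  have h := card_symmDiff_add_two_mul_card_inter s t
  rw [Nat.even_iff] at *
  omega

theorem Finset.filter_symmDiff {α : Type*} [DecidableEq α] (p : α → Prop) [DecidablePred p]
    (s t : Finset α) : {x ∈ s ∆ t | p x} = {x ∈ s | p x} ∆ {x ∈ t | p x} := by
  ext x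
  simp only [mem_filter, mem_symmDiff]
  tauto

theorem List.IsChain.iff_of_mem {α : Type*} {p : α → Prop} {l : List α}
    (h : l.IsChain (fun x y => p x ↔ p y)) {a b : α} (ha : a ∈ l) (hb : b ∈ l) : p a ↔ p b := by
  cases l with
  | nil => simp at ha
  | cons c l =>
    have hc : ∀ x ∈ c :: l, p x ↔ p c :=
      h.induction (fun x => p x ↔ p c) _ (fun _ _ hxy hx => hxy.symm.trans hx) fun _ => Iff.rfl
    exact (hc a ha).trans (hc b hb).symm

namespace SimpleGraph.Walk

variable {V : Type*} {G : SimpleGraph V}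

theorem mem_edges_iff_of_inter_diff_eq {K : Set (Sym2 V)} {u₁ v₁ u₂ v₂ : V}
    {w₁ : G.Walk u₁ v₁} {w₂ : G.Walk u₂ v₂}
    (h : {e | e ∈ w₁.edges} ∩ (G.edgeSet \ K) = {e | e ∈ w₂.edges} ∩ (G.edgeSet \ K))
    {e : Sym2 V} (he : e ∉ K) : e ∈ w₁.edges ↔ e ∈ w₂.edges := by
  have hmem : ∀ {u v} (w : G.Walk u v), e ∈ w.edges ↔ e ∈ {e | e ∈ w.edges} ∩ (G.edgeSet \ K) :=
    fun w => ⟨fun hw => ⟨hw, w.edges_subset_edgeSet hw, he⟩, fun hw => hw.1⟩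
  rw [hmem, h, ← hmem]

variable [DecidableEq V]

theorem countP_mem_edges {u v : V} (w : G.Walk u v) (x : V) :
    w.edges.countP (x ∈ ·) = w.support.dropLast.count x + w.support.tail.count x := by
  induction w with
  | nil => simp
  | cons h p ih =>
    rw [edges_cons, support_cons, List.countP_cons, ih,
      List.dropLast_cons_of_ne_nil p.support_ne_nil, List.tail_cons, List.count_cons,
      ← p.cons_tail_support, List.count_cons]
    have := h.ne
    simp only [Sym2.mem_iff, beq_iff_eq, List.tail_cons]
    grind

theorem IsTrail.card_filter_mem_edges {u v : V} {w : G.Walk u v} (hw : w.IsTrail) (x : V) :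
    #{e ∈ w.edges.toFinset | x ∈ e} = w.edges.countP (x ∈ ·) := by
  rw [List.countP_eq_length_filter, ← List.toFinset_card_of_nodup (hw.edges_nodup.filter _)]
  congr 1
  ext e
  simp

theorem IsTrail.even_card_filter_mem_edges {u : V} {w : G.Walk u u} (hw : w.IsTrail) (x : V) :
    Even #{e ∈ w.edges.toFinset | x ∈ e} := by
  rw [hw.card_filter_mem_edges, hw.even_countP_edges_iff]
  exact fun h => absurd rfl h

theorem IsCycle.card_filter_mem_edges_le_two {u : V} {w : G.Walk u u} (hw : w.IsCycle) (x : V) :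
    #{e ∈ w.edges.toFinset | x ∈ e} ≤ 2 := by
  rw [hw.isTrail.card_filter_mem_edges, countP_mem_edges]
  have := List.nodup_iff_count_le_one.mp hw.nodup_dropLast_support x
  have := List.nodup_iff_count_le_one.mp hw.support_nodup x
  omega

theorem IsCycle.eq_empty_or_eq_of_even_card_filter_mem {u : V} {w : G.Walk u u} (hw : w.IsCycle)
    {D : Finset (Sym2 V)} (hD : D ⊆ w.edges.toFinset) (heven : ∀ x, Even #{e ∈ D | x ∈ e}) :
    D = ∅ ∨ D = w.edges.toFinset := by
  have hlocal : ∀ x, ∀ e ∈ D, ∀ e' ∈ w.edges, x ∈ e → x ∈ e' → e' ∈ D := by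
    intro x e he e' he' hxe hxe'
    have hsub : {e ∈ D | x ∈ e} ⊆ {e ∈ w.edges.toFinset | x ∈ e} := filter_subset_filter _ hD
    have hpos : 0 < #{e ∈ D | x ∈ e} := card_pos.mpr ⟨e, mem_filter.mpr ⟨he, hxe⟩⟩
    have hcard : #{e ∈ w.edges.toFinset | x ∈ e} ≤ #{e ∈ D | x ∈ e} := by
      have := hw.card_filter_mem_edges_le_two x
      have := Nat.even_iff.mp (heven x)
      omega
    have he'D : e' ∈ {e ∈ D | x ∈ e} := by
      rw [eq_of_subset_of_card_le hsub hcard]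
      exact mem_filter.mpr ⟨List.mem_toFinset.mpr he', hxe'⟩
    exact (mem_filter.mp he'D).1
  have hchain : w.darts.IsChain (fun d d' => d.edge ∈ D ↔ d'.edge ∈ D) := by
    refine w.isChain_dartAdj_darts.imp_of_mem_imp fun d d' hd hd' hadj => ?_
    have hd_mem : d.snd ∈ d.edge := Sym2.mem_mk_right _ _
    have hd'_mem : d.snd ∈ d'.edge := hadj ▸ Sym2.mem_mk_left _ _
    exact ⟨fun h => hlocal _ _ h _ (List.mem_map_of_mem hd') hd_mem hd'_mem,
      fun h => hlocal _ _ h _ (List.mem_map_of_mem hd) hd'_mem hd_mem⟩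
  rcases D.eq_empty_or_nonempty with hempty | ⟨e, he⟩
  · exact Or.inl hempty
  refine Or.inr (hD.antisymm fun e' he' => ?_)
  obtain ⟨d, hd, rfl⟩ := List.mem_map.mp (w.edges_eq_map_darts ▸ List.mem_toFinset.mp (hD he))
  obtain ⟨d', hd', rfl⟩ := List.mem_map.mp (w.edges_eq_map_darts ▸ List.mem_toFinset.mp he')
  exact (hchain.iff_of_mem hd hd').mp he

theorem IsCycle.edges_toFinset_eq_or_symmDiff_eq {v u₁ u₂ : V} {H : G.Walk v v} (hH : H.IsCycle)
    {w₁ : G.Walk u₁ u₁} {w₂ : G.Walk u₂ u₂} (hw₁ : w₁.IsTrail) (hw₂ : w₂.IsTrail)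
    (hagree : ∀ e ∉ H.edges, e ∈ w₁.edges ↔ e ∈ w₂.edges) :
    w₁.edges.toFinset = w₂.edges.toFinset ∨
      w₁.edges.toFinset ∆ w₂.edges.toFinset = H.edges.toFinset := by
  rw [← symmDiff_eq_bot, bot_eq_empty]
  refine hH.eq_empty_or_eq_of_even_card_filter_mem (fun e he => ?_) fun x => ?_
  · by_contra hH'
    rw [List.mem_toFinset] at hH'
    rw [mem_symmDiff, List.mem_toFinset, List.mem_toFinset, hagree e hH'] at he
    tauto
  · rw [filter_symmDiff]
    exact even_card_symmDiff (hw₁.even_card_filter_mem_edges x) (hw₂.even_card_filter_mem_edges x)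

end SimpleGraph.Walk

theorem stmt_8_general {V : Type*} [DecidableEq V] (G : SimpleGraph V) (v : V) (H : G.Walk v v)
    (hH : H.IsHamiltonianCycle)
    (S : Set (Sym2 V)) (hS : S = G.edgeSet \ {e | e ∈ H.edges})
    (F : Set (Sym2 V)) :
    ∀ C₁ C₂ C₃ : Set (Sym2 V),
      ((∃ (u : V) (w : G.Walk u u), w.IsCycle ∧ {e | e ∈ w.edges} = C₁) ∧ C₁ ∩ S = F) →
      ((∃ (u : V) (w : G.Walk u u), w.IsCycle ∧ {e | e ∈ w.edges} = C₂) ∧ C₂ ∩ S = F) →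
      ((∃ (u : V) (w : G.Walk u u), w.IsCycle ∧ {e | e ∈ w.edges} = C₃) ∧ C₃ ∩ S = F) →
      C₁ = C₂ ∨ C₁ = C₃ ∨ C₂ = C₃ := by
  subst hS
  rintro _ _ _ ⟨⟨u₁, w₁, hw₁, rfl⟩, h₁⟩ ⟨⟨u₂, w₂, hw₂, rfl⟩, h₂⟩ ⟨⟨u₃, w₃, hw₃, rfl⟩, h₃⟩
  simp only [← List.coe_toFinset, coe_inj]
  have h₁₂ := hH.isCycle.edges_toFinset_eq_or_symmDiff_eq hw₁.isTrail hw₂.isTrail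
    fun _ => SimpleGraph.Walk.mem_edges_iff_of_inter_diff_eq (h₁.trans h₂.symm)
  have h₁₃ := hH.isCycle.edges_toFinset_eq_or_symmDiff_eq hw₁.isTrail hw₃.isTrail
    fun _ => SimpleGraph.Walk.mem_edges_iff_of_inter_diff_eq (h₁.trans h₃.symm)
  rcases h₁₂ with h₁₂ | h₁₂
  · exact Or.inl h₁₂
  rcases h₁₃ with h₁₃ | h₁₃
  · exact Or.inr (Or.inl h₁₃)
  exact Or.inr (Or.inr (symmDiff_right_inj.mp (h₁₂.trans h₁₃.symm)))

/-- In a graph consisting of a Hamiltonian cycle `H` together with a set `S` of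
spokes (chords), every nonempty `F ⊆ S` is the spoke-set of at most two cycles. -/
theorem stmt_8 {V : Type*} [DecidableEq V] (G : SimpleGraph V) (v : V) (H : G.Walk v v)
    (hH : H.IsHamiltonianCycle)
    (S : Set (Sym2 V)) (hS : S = G.edgeSet \ {e | e ∈ H.edges})
    (F : Set (Sym2 V)) (hF : F ⊆ S) (hFne : F.Nonempty) :
    ∀ C₁ C₂ C₃ : Set (Sym2 V),
      ((∃ (u : V) (w : G.Walk u u), w.IsCycle ∧ {e | e ∈ w.edges} = C₁) ∧ C₁ ∩ S = F) →
      ((∃ (u : V) (w : G.Walk u u), w.IsCycle ∧ {e | e ∈ w.edges} = C₂) ∧ C₂ ∩ S = F) →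
      ((∃ (u : V) (w : G.Walk u u), w.IsCycle ∧ {e | e ∈ w.edges} = C₃) ∧ C₃ ∩ S = F) →
      C₁ = C₂ ∨ C₁ = C₃ ∨ C₂ = C₃ :=
  stmt_8_general G v H hH S hS F
end

section
/- Let G be a cubic graph on n vertices with a Hamiltonian cycle H. If F is a set of spokes of G and e ∈ F is a spoke intersected by no other spoke of F, and |F| > 1, then F forms at most one cycle in G (i.e., there is at most one cycle of G whose set of spokes is exactly F). -/
/-!
A closed trail crosses every vertex cut an even number of times. Applied to the cut around a
single vertex `x`: if the spoke at `x` lies in `F`, the cycle uses exactly one of the two edges of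
`H` at `x`, otherwise both or neither. Hence the edges of `H` on a cycle formed by `F` are
determined, going around `H`, by whether it uses `s(i, i + 1)`.

That choice is forced by the uncrossed spoke `s(i, j)`. The open arc of `H` from `i` to `j` is
crossed by no spoke of `F`, so the cycle crosses it only through `s(i, i + 1)` and `s(j - 1, j)`,
and it uses both or neither; the same holds for the opposite arc with `s(j, j + 1)` and
`s(i - 1, i)`. If the cycle avoids `s(i, i + 1)` it never enters the open arc from `i` to `j`; if it
uses it, it avoids `s(i - 1, i)` and so never enters the opposite arc. Either way the side on which
an endpoint of a second spoke of `F` lies tells which case occurs.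
-/

open SimpleGraph Finset

def Sym2.Crosses {V : Type*} (U : Set V) : Sym2 V → Prop :=
  Sym2.lift ⟨fun a b => Xor (a ∈ U) (b ∈ U), fun _ _ => xor_comm _ _⟩

theorem Sym2.crosses_mk {V : Type*} {U : Set V} {a b : V} :
    s(a, b).Crosses U ↔ Xor (a ∈ U) (b ∈ U) :=
  Iff.rfl

namespace SimpleGraph.Walk

variable {V : Type*} {G : SimpleGraph V} {U : Set V}

open Classical in
theorem even_countP_crosses {u v : V} (w : G.Walk u v) (U : Set V) :
    Even (w.edges.countP fun e => decide (e.Crosses U)) ↔ (u ∈ U ↔ v ∈ U) := by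
  induction w with
  | nil => simp
  | @cons a c b _ q ih =>
    rw [edges_cons, List.countP_cons, Nat.even_add, ih]
    by_cases ha : a ∈ U <;> by_cases hc : c ∈ U <;> simp [Sym2.crosses_mk, ha, hc]

theorem mem_edges_iff_of_inter_eq {u v : V} {w : G.Walk u v} {S F : Set (Sym2 V)}
    (hF : {e | e ∈ w.edges} ∩ S = F) {e : Sym2 V} (he : e ∈ S) :
    e ∈ w.edges ↔ e ∈ F := by
  rw [← hF]
  exact ⟨fun h => ⟨h, he⟩, And.left⟩

theorem mem_iff_of_forall_not_crosses {u v : V} (w : G.Walk u v)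
    (h : ∀ e ∈ w.edges, ¬e.Crosses U) : u ∈ U ↔ v ∈ U := by
  classical
  refine (even_countP_crosses w U).mp ?_
  rw [List.countP_eq_zero.mpr fun e he => by simpa using h e he]
  exact Even.zero

theorem mem_iff_of_mem_support_of_forall_not_crosses {u v x y : V} (w : G.Walk u v)
    (h : ∀ e ∈ w.edges, ¬e.Crosses U) (hx : x ∈ w.support) (hy : y ∈ w.support) :
    x ∈ U ↔ y ∈ U := by
  classical
  have hu : ∀ z (hz : z ∈ w.support), u ∈ U ↔ z ∈ U := fun z hz =>
    (w.takeUntil z hz).mem_iff_of_forall_not_crosses fun e he =>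
      h e (w.edges_takeUntil_subset_edges hz he)
  exact (hu x hx).symm.trans (hu y hy)

theorem IsTrail.even_card_filter_mem_edges_s9 [DecidableEq V] {u : V} {w : G.Walk u u}
    (hw : w.IsTrail) {T : Finset (Sym2 V)} (hT : ∀ e ∈ T, e.Crosses U)
    (hwT : ∀ e ∈ w.edges, e.Crosses U → e ∈ T) : Even #{e ∈ T | e ∈ w.edges} := by
  classical
  have heven := (even_countP_crosses w U).mpr Iff.rfl
  rw [List.countP_eq_length_filter, ← List.toFinset_card_of_nodup (hw.edges_nodup.filter _)]
    at heven
  convert heven using 2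
  ext e
  simp only [Finset.mem_filter, List.mem_toFinset, List.mem_filter, decide_eq_true_eq]
  exact ⟨fun ⟨heT, hew⟩ => ⟨hew, hT e heT⟩, fun ⟨hew, hc⟩ => ⟨hwT e hew hc, hew⟩⟩

theorem IsTrail.mem_edges_iff_of_crosses {u : V} {w : G.Walk u u} (hw : w.IsTrail)
    {e₁ e₂ : Sym2 V} (h₁ : e₁.Crosses U) (h₂ : e₂.Crosses U)
    (hw₁₂ : ∀ e ∈ w.edges, e.Crosses U → e = e₁ ∨ e = e₂) :
    e₁ ∈ w.edges ↔ e₂ ∈ w.edges := by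
  classical
  have := hw.even_card_filter_mem_edges_s9 (U := U) (T := {e₁, e₂}) (by simp [h₁, h₂])
    (by simpa using hw₁₂)
  rw [Finset.filter_insert, Finset.filter_singleton] at this
  by_cases he₁ : e₁ ∈ w.edges <;> by_cases he₂ : e₂ ∈ w.edges <;>
    simp_all [Nat.even_iff]

theorem IsTrail.mem_edges_iff_xor {u : V} {w : G.Walk u u} (hw : w.IsTrail) {x a b c : V}
    (hab : a ≠ b) (hac : a ≠ c) (hbc : b ≠ c) (hx : G.neighborSet x = {a, b, c}) :
    s(x, c) ∈ w.edges ↔ Xor (s(x, a) ∈ w.edges) (s(x, b) ∈ w.edges) := by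
  classical
  have hadj : ∀ y, G.Adj x y ↔ y = a ∨ y = b ∨ y = c := fun y => by
    rw [← mem_neighborSet, hx]; simp
  have hcross : ∀ y, G.Adj x y → s(x, y).Crosses {x} := fun y hy => by
    simp [Sym2.crosses_mk, hy.ne.symm]
  have := hw.even_card_filter_mem_edges_s9 (U := {x}) (T := {s(x, a), s(x, b), s(x, c)})
    (by simp [hcross, hadj])
    (by
      intro e he hec
      induction e using Sym2.ind with
      | _ y z =>
      have hyz := w.adj_of_mem_edges he
      simp only [Sym2.crosses_mk, Set.mem_singleton_iff] at hec
      rcases hec with ⟨rfl, -⟩ | ⟨rfl, -⟩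
      · rcases (hadj z).mp hyz with rfl | rfl | rfl <;> simp
      · rcases (hadj y).mp hyz.symm with rfl | rfl | rfl <;> simp [Sym2.eq_swap])
  rw [Finset.filter_insert, Finset.filter_insert, Finset.filter_singleton] at this
  by_cases ha : s(x, a) ∈ w.edges <;> by_cases hb : s(x, b) ∈ w.edges <;>
    by_cases hc : s(x, c) ∈ w.edges <;> simp_all [Nat.even_iff]

end SimpleGraph.Walk

namespace Fin

variable {n : ℕ}

theorem val_sub_eq_ite (a b : Fin n) :
    (a - b).val = if b.val ≤ a.val then a.val - b.val else n + a.val - b.val := by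
  split_ifs with h
  · exact coe_sub_iff_le.mpr h
  · exact coe_sub_iff_lt.mpr (not_le.mp h)

variable [NeZero n]

theorem val_add_one_eq_ite (hn : 2 ≤ n) (a : Fin n) :
    (a + 1).val = if a.val + 1 = n then 0 else a.val + 1 := by
  rw [val_add, val_one', Nat.mod_eq_of_lt hn]
  split_ifs with ha
  · simp [ha]
  · exact Nat.mod_eq_of_lt (by omega)

theorem val_sub_one_eq_ite (hn : 2 ≤ n) (a : Fin n) :
    (a - 1).val = if a.val = 0 then n - 1 else a.val - 1 := by
  rw [val_sub_eq_ite, val_one', Nat.mod_eq_of_lt hn]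
  split_ifs <;> omega

theorem add_one_ne_sub_one (hn : 3 ≤ n) (a : Fin n) : a + 1 ≠ a - 1 := by
  simp only [ne_eq, Fin.ext_iff, val_add_one_eq_ite (show 2 ≤ n by omega),
    val_sub_one_eq_ite (show 2 ≤ n by omega)]
  split_ifs <;> omega

theorem forall_of_add_one {P : Fin n → Prop} (i : Fin n) (hi : P i)
    (hsucc : ∀ v, P v → P (v + 1)) (v : Fin n) : P v := by
  obtain ⟨m, rfl⟩ := Nat.exists_eq_succ_of_ne_zero (NeZero.ne n)
  have key : ∀ k : Fin (m + 1), P (i + k) := fun k =>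
    Fin.induction (by simpa using hi) (fun k hk => by
      rw [← coeSucc_eq_succ, ← add_assoc]; exact hsucc _ hk) k
  simpa using key (v - i)

end Fin

section Arcs

variable {n : ℕ}

/-- The vertices strictly between `a` and `b` when going forward along the cycle `v ↦ v + 1`. -/
def openArc (a b : Fin n) : Set (Fin n) :=
  {x | 0 < (x - a).val ∧ (x - a).val < (b - a).val}

theorem left_notMem_openArc (a b : Fin n) : a ∉ openArc a b := by
  simp [openArc, Fin.val_sub_eq_ite]

theorem right_notMem_openArc (a b : Fin n) : b ∉ openArc a b := by
  simp [openArc]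

theorem mem_openArc_swap_iff {a b x : Fin n} (hab : a ≠ b) (hxa : x ≠ a) (hxb : x ≠ b) :
    x ∈ openArc b a ↔ x ∉ openArc a b := by
  simp only [openArc, Set.mem_ofPred_eq, ne_eq, Fin.ext_iff, Fin.val_sub_eq_ite] at hab hxa hxb ⊢
  split_ifs <;> omega

theorem crosses_openArc_add_one_iff [NeZero n] {a b v : Fin n} (hba : b ≠ a)
    (hba' : b ≠ a + 1) :
    s(v, v + 1).Crosses (openArc a b) ↔ v = a ∨ v + 1 = b := by
  have hn : 2 ≤ n := by
    by_contra h
    exact hba (Fin.ext (by omega))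
  simp only [Sym2.crosses_mk, openArc, Set.mem_ofPred_eq, Xor, Fin.ext_iff, ne_eq,
    Fin.val_sub_eq_ite, Fin.val_add_one_eq_ite hn] at hba hba' ⊢
  split_ifs at hba hba' ⊢ <;> omega

end Arcs

section CubicHamiltonian

variable {n : ℕ} [NeZero n] {G : SimpleGraph (Fin n)}

def spokes (G : SimpleGraph (Fin n)) : Set (Sym2 (Fin n)) :=
  {e ∈ G.edgeSet | ∀ v : Fin n, e ≠ s(v, v + 1)}

theorem mk_mem_spokes_iff {x y : Fin n} :
    s(x, y) ∈ spokes G ↔ G.Adj x y ∧ y ≠ x + 1 ∧ y ≠ x - 1 := by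
  simp only [spokes, Set.mem_ofPred_eq, mem_edgeSet, ne_eq, Sym2.eq_iff, not_or, not_and]
  refine and_congr_right fun _ =>
    ⟨fun h => ⟨(h x).1 rfl, fun hy => (h (x - 1)).2 (by simp) hy⟩, fun ⟨h₁, h₂⟩ v => ⟨?_, ?_⟩⟩
  · rintro rfl; exact h₁
  · rintro rfl rfl; simp at h₂

theorem mem_spokes_or_exists_eq_add_one {e : Sym2 (Fin n)} (he : e ∈ G.edgeSet) :
    e ∈ spokes G ∨ ∃ v, e = s(v, v + 1) := by
  by_cases h : ∀ v, e ≠ s(v, v + 1)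
  · exact .inl ⟨he, h⟩
  · simp only [ne_eq, not_forall, not_not] at h
    exact .inr h

theorem eq_of_crosses_openArc {i j : Fin n} (hij : s(i, j) ∈ spokes G) {e : Sym2 (Fin n)}
    (he : e ∈ G.edgeSet) (hnc : e ∈ spokes G → e ≠ s(i, j) → ¬e.Crosses (openArc i j))
    (hc : e.Crosses (openArc i j)) : e = s(i, i + 1) ∨ e = s(j - 1, j) := by
  obtain ⟨hadj, hj, -⟩ := mk_mem_spokes_iff.mp hij
  rcases mem_spokes_or_exists_eq_add_one he with hS | ⟨v, rfl⟩
  · by_cases hne : e = s(i, j)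
    · subst hne
      simp [Sym2.crosses_mk, left_notMem_openArc, right_notMem_openArc] at hc
    · exact absurd hc (hnc hS hne)
  · rcases (crosses_openArc_add_one_iff hadj.ne.symm hj).mp hc with rfl | rfl
    · exact .inl rfl
    · exact .inr (by rw [add_sub_cancel_right])

namespace SimpleGraph.Walk

variable {u : Fin n} {w : G.Walk u u}

theorem notMem_openArc_of_mem_support {i j : Fin n} (hij : s(i, j) ∈ spokes G)
    (hijw : s(i, j) ∈ w.edges)
    (hnc : ∀ e ∈ w.edges, e ∈ spokes G → e ≠ s(i, j) → ¬e.Crosses (openArc i j))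
    (hi : s(i, i + 1) ∉ w.edges) (hj : s(j - 1, j) ∉ w.edges) {x : Fin n}
    (hx : x ∈ w.support) : x ∉ openArc i j := by
  have hnot : ∀ e ∈ w.edges, ¬e.Crosses (openArc i j) := fun e he hc => by
    rcases eq_of_crosses_openArc hij (w.edges_subset_edgeSet he) (hnc e he) hc with rfl | rfl
    exacts [hi he, hj he]
  rw [← w.mem_iff_of_mem_support_of_forall_not_crosses hnot
    (w.fst_mem_support_of_mem_edges hijw) hx]
  exact left_notMem_openArc i j

theorem IsTrail.mk_add_one_mem_edges_iff_of_openArc (hw : w.IsTrail) {i j : Fin n}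
    (hij : s(i, j) ∈ spokes G)
    (hnc : ∀ e ∈ w.edges, e ∈ spokes G → e ≠ s(i, j) → ¬e.Crosses (openArc i j)) :
    s(i, i + 1) ∈ w.edges ↔ s(j - 1, j) ∈ w.edges := by
  obtain ⟨hadj, hj, -⟩ := mk_mem_spokes_iff.mp hij
  have hcross := fun v => crosses_openArc_add_one_iff (v := v) hadj.ne.symm hj
  refine hw.mem_edges_iff_of_crosses ((hcross i).mpr (.inl rfl)) ?_
    fun e he hc => eq_of_crosses_openArc hij (w.edges_subset_edgeSet he) (hnc e he) hc
  simpa using (hcross (j - 1)).mpr (.inr (sub_add_cancel j 1))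

end SimpleGraph.Walk

variable [DecidableRel G.Adj]

theorem exists_neighborSet_eq (hreg : G.IsRegularOfDegree 3) (hham : ∀ v : Fin n, G.Adj v (v + 1))
    (x : Fin n) :
    ∃ c, x + 1 ≠ x - 1 ∧ x + 1 ≠ c ∧ x - 1 ≠ c ∧
      G.neighborSet x = {x + 1, x - 1, c} := by
  have hn : 3 < n := by simpa [hreg x] using G.degree_lt_card_verts x
  have hne : x + 1 ≠ x - 1 := Fin.add_one_ne_sub_one (by omega) x
  have hsub : {x + 1, x - 1} ⊆ G.neighborFinset x := by
    intro y hy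
    simp only [Finset.mem_insert, Finset.mem_singleton] at hy
    rcases hy with rfl | rfl
    · simpa using hham x
    · simpa using (hham (x - 1)).symm
  obtain ⟨c, hc⟩ := Finset.card_eq_one.mp <| show #(G.neighborFinset x \ {x + 1, x - 1}) = 1 by
    rw [card_sdiff_of_subset hsub, card_neighborFinset_eq_degree, hreg x, card_pair hne]
  have hcN := hc ▸ Finset.mem_singleton_self c
  simp only [Finset.mem_sdiff, Finset.mem_insert, Finset.mem_singleton, not_or] at hcN
  refine ⟨c, hne, Ne.symm hcN.2.1, Ne.symm hcN.2.2, ?_⟩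
  rw [← coe_neighborFinset, ← Finset.union_sdiff_of_subset hsub, hc]
  ext y
  simp

theorem eq_of_mk_mem_spokes (hreg : G.IsRegularOfDegree 3) (hham : ∀ v : Fin n, G.Adj v (v + 1))
    {x y z : Fin n} (hy : s(x, y) ∈ spokes G) (hz : s(x, z) ∈ spokes G) : y = z := by
  obtain ⟨c, -, -, -, hN⟩ := exists_neighborSet_eq hreg hham x
  have hc : ∀ w, s(x, w) ∈ spokes G → w = c := fun w hw => by
    obtain ⟨hxw, h₁, h₂⟩ := mk_mem_spokes_iff.mp hw
    rw [← mem_neighborSet, hN] at hxw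
    simpa [h₁, h₂] using hxw
  rw [hc y hy, hc z hz]

theorem ne_of_mk_mem_spokes (hreg : G.IsRegularOfDegree 3) (hham : ∀ v : Fin n, G.Adj v (v + 1))
    {i j k m : Fin n} (hij : s(i, j) ∈ spokes G) (hkm : s(k, m) ∈ spokes G)
    (hne : s(k, m) ≠ s(i, j)) : k ≠ i ∧ k ≠ j := by
  constructor
  · rintro rfl
    exact hne (by rw [eq_of_mk_mem_spokes hreg hham hkm hij])
  · rintro rfl
    rw [Sym2.eq_swap] at hij
    exact hne (by rw [eq_of_mk_mem_spokes hreg hham hkm hij, Sym2.eq_swap])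

theorem crosses_openArc_swap_iff (hreg : G.IsRegularOfDegree 3)
    (hham : ∀ v : Fin n, G.Adj v (v + 1)) {i j : Fin n} (hij : s(i, j) ∈ spokes G)
    {e : Sym2 (Fin n)} (he : e ∈ spokes G) (hne : e ≠ s(i, j)) :
    e.Crosses (openArc j i) ↔ e.Crosses (openArc i j) := by
  induction e using Sym2.ind with
  | _ k m =>
  have hk := ne_of_mk_mem_spokes hreg hham hij he hne
  rw [Sym2.eq_swap] at he hne
  have hm := ne_of_mk_mem_spokes hreg hham hij he hne
  have hij' : i ≠ j := (mk_mem_spokes_iff.mp hij).1.ne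
  rw [Sym2.crosses_mk, Sym2.crosses_mk, mem_openArc_swap_iff hij' hk.1 hk.2,
    mem_openArc_swap_iff hij' hm.1 hm.2, xor_not_not]

namespace SimpleGraph.Walk.IsTrail

variable {u : Fin n} {w : G.Walk u u}

theorem mk_add_one_mem_edges_iff (hreg : G.IsRegularOfDegree 3)
    (hham : ∀ v : Fin n, G.Adj v (v + 1)) (hw : w.IsTrail) (x : Fin n) :
    s(x, x + 1) ∈ w.edges ↔
      Xor (s(x - 1, x) ∈ w.edges) (∃ y, s(x, y) ∈ w.edges ∧ s(x, y) ∈ spokes G) := by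
  obtain ⟨c, h₁, h₂, h₃, hN⟩ := exists_neighborSet_eq hreg hham x
  have hc : s(x, c) ∈ spokes G :=
    mk_mem_spokes_iff.mpr ⟨by rw [← mem_neighborSet, hN]; simp, h₂.symm, h₃.symm⟩
  have hspoke : (∃ y, s(x, y) ∈ w.edges ∧ s(x, y) ∈ spokes G) ↔ s(x, c) ∈ w.edges :=
    ⟨fun ⟨_, hy, hyS⟩ => eq_of_mk_mem_spokes hreg hham hyS hc ▸ hy, fun h => ⟨c, h, hc⟩⟩
  rw [hspoke, hw.mem_edges_iff_xor h₁ h₂ h₃ hN, Sym2.eq_swap (a := x - 1)]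
  unfold Xor
  tauto

theorem mem_edges_iff_of_spokes (hreg : G.IsRegularOfDegree 3)
    (hham : ∀ v : Fin n, G.Adj v (v + 1)) (hw : w.IsTrail) {u' : Fin n} {w' : G.Walk u' u'}
    (hw' : w'.IsTrail) (hsp : ∀ e ∈ spokes G, e ∈ w.edges ↔ e ∈ w'.edges) {i : Fin n}
    (hi : s(i, i + 1) ∈ w.edges ↔ s(i, i + 1) ∈ w'.edges) (e : Sym2 (Fin n)) :
    e ∈ w.edges ↔ e ∈ w'.edges := by
  have hH : ∀ v : Fin n, s(v, v + 1) ∈ w.edges ↔ s(v, v + 1) ∈ w'.edges := by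
    refine Fin.forall_of_add_one i hi fun v hv => ?_
    have hsp' : (∃ y, s(v + 1, y) ∈ w.edges ∧ s(v + 1, y) ∈ spokes G) ↔
        (∃ y, s(v + 1, y) ∈ w'.edges ∧ s(v + 1, y) ∈ spokes G) :=
      exists_congr fun y => and_congr_left (hsp _)
    rw [hw.mk_add_one_mem_edges_iff hreg hham, hw'.mk_add_one_mem_edges_iff hreg hham,
      add_sub_cancel_right, hv, hsp']
  by_cases he : e ∈ G.edgeSet
  · rcases mem_spokes_or_exists_eq_add_one he with hS | ⟨v, rfl⟩
    exacts [hsp e hS, hH v]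
  · exact iff_of_false (fun h => he (w.edges_subset_edgeSet h))
      (fun h => he (w'.edges_subset_edgeSet h))

theorem mk_add_one_mem_edges_iff_mem_openArc (hreg : G.IsRegularOfDegree 3)
    (hham : ∀ v : Fin n, G.Adj v (v + 1)) (hw : w.IsTrail) {i j : Fin n}
    (hij : s(i, j) ∈ spokes G) (hijw : s(i, j) ∈ w.edges)
    (hnc : ∀ e ∈ w.edges, e ∈ spokes G → e ≠ s(i, j) → ¬e.Crosses (openArc i j))
    {k m : Fin n} (hkm : s(k, m) ∈ spokes G) (hkmw : s(k, m) ∈ w.edges)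
    (hne : s(k, m) ≠ s(i, j)) :
    s(i, i + 1) ∈ w.edges ↔ k ∈ openArc i j := by
  have hk : k ∈ w.support := w.fst_mem_support_of_mem_edges hkmw
  constructor
  · intro hi
    have hji : s(j, i) ∈ spokes G := Sym2.eq_swap (a := i) ▸ hij
    have hnc' : ∀ e ∈ w.edges, e ∈ spokes G → e ≠ s(j, i) → ¬e.Crosses (openArc j i) :=
      fun e he hS hne' => by
        rw [Sym2.eq_swap] at hne'
        rw [crosses_openArc_swap_iff hreg hham hij hS hne']
        exact hnc e he hS hne'
    have hi' : s(i - 1, i) ∉ w.edges := by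
      have hxor := (hw.mk_add_one_mem_edges_iff hreg hham i).mp hi
      have hspoke : ∃ y, s(i, y) ∈ w.edges ∧ s(i, y) ∈ spokes G := ⟨j, hijw, hij⟩
      rcases hxor with ⟨-, h⟩ | ⟨-, h⟩
      exacts [absurd hspoke h, h]
    have hj : s(j, j + 1) ∉ w.edges :=
      fun h => hi' ((hw.mk_add_one_mem_edges_iff_of_openArc hji hnc').mp h)
    have hk' := ne_of_mk_mem_spokes hreg hham hij hkm hne
    have := notMem_openArc_of_mem_support hji (Sym2.eq_swap (a := i) ▸ hijw) hnc' hj hi' hk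
    rwa [mem_openArc_swap_iff (mk_mem_spokes_iff.mp hij).1.ne hk'.1 hk'.2, not_not] at this
  · contrapose
    intro hi
    exact notMem_openArc_of_mem_support hij hijw hnc hi
      (fun h => hi ((hw.mk_add_one_mem_edges_iff_of_openArc hij hnc).mpr h)) hk

end SimpleGraph.Walk.IsTrail

end CubicHamiltonian

/-- In a cubic hamiltonian graph on `Fin n` (the Hamiltonian cycle being
`v ↦ v + 1`), if `F` is a set of spokes with `|F| > 1` containing a spoke
`s(i,j)` intersected by no other spoke of `F`, then `F` forms at most one cycle. -/
theorem stmt_9 {n : ℕ} [NeZero n] (G : SimpleGraph (Fin n)) [DecidableRel G.Adj]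
    (hreg : G.IsRegularOfDegree 3)
    (hham : ∀ v : Fin n, G.Adj v (v + 1))
    (btw : Fin n → Fin n → Fin n → Prop)
    (hbtw : ∀ a b c : Fin n, btw a b c ↔
      (0 < (c.val + n - a.val) % n ∧ (c.val + n - a.val) % n < (b.val + n - a.val) % n))
    (S : Set (Sym2 (Fin n)))
    (hS : S = {e ∈ G.edgeSet | ∀ v : Fin n, e ≠ s(v, v + 1)})
    (F : Set (Sym2 (Fin n))) (hF : F ⊆ S) (hFbig : 1 < F.ncard)
    (i j : Fin n) (he : s(i, j) ∈ F)
    (hnoint : ∀ k m : Fin n, s(k, m) ∈ F → s(k, m) ≠ s(i, j) →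
      ¬ Xor' (btw i j k) (btw i j m)) :
    ∀ C₁ C₂ : Set (Sym2 (Fin n)),
      ((∃ (u : Fin n) (w : G.Walk u u), w.IsCycle ∧ {e | e ∈ w.edges} = C₁) ∧ C₁ ∩ S = F) →
      ((∃ (u : Fin n) (w : G.Walk u u), w.IsCycle ∧ {e | e ∈ w.edges} = C₂) ∧ C₂ ∩ S = F) →
      C₁ = C₂ := by
  subst hS
  have hbtw' : ∀ x, btw i j x ↔ x ∈ openArc i j := fun x => by
    have hval : ∀ y : Fin n, (y.val + n - i.val) % n = (y - i).val := fun y => by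
      rw [Fin.val_sub, Nat.add_comm (n - _), Nat.add_sub_assoc i.isLt.le]
    rw [hbtw, hval, hval, openArc, Set.mem_ofPred_eq]
  have hnc : ∀ e ∈ F, e ≠ s(i, j) → ¬e.Crosses (openArc i j) := fun e =>
    Sym2.ind (fun k m hkm hne => by
      rw [Sym2.crosses_mk, ← hbtw', ← hbtw']; exact hnoint k m hkm hne) e
  obtain ⟨e', he'F, he'⟩ := Set.exists_ne_of_one_lt_ncard hFbig s(i, j)
  induction e' using Sym2.ind with
  | _ k m =>
  have key : ∀ {u} (w : G.Walk u u), w.IsCycle → {e | e ∈ w.edges} ∩ spokes G = F →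
      (s(i, i + 1) ∈ w.edges ↔ k ∈ openArc i j) := fun w hw hwF =>
    hw.isTrail.mk_add_one_mem_edges_iff_mem_openArc hreg hham (hF he)
      ((Walk.mem_edges_iff_of_inter_eq hwF (hF he)).mpr he)
      (fun e hew hS => hnc e ((Walk.mem_edges_iff_of_inter_eq hwF hS).mp hew)) (hF he'F)
      ((Walk.mem_edges_iff_of_inter_eq hwF (hF he'F)).mpr he'F) he'
  rintro _ _ ⟨⟨u₁, w₁, hw₁, rfl⟩, hF₁⟩ ⟨⟨u₂, w₂, hw₂, rfl⟩, hF₂⟩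
  ext e
  exact hw₁.isTrail.mem_edges_iff_of_spokes hreg hham hw₂.isTrail
    (fun e hS => (Walk.mem_edges_iff_of_inter_eq hF₁ hS).trans
      (Walk.mem_edges_iff_of_inter_eq hF₂ hS).symm)
    ((key w₁ hw₁ hF₁).trans (key w₂ hw₂ hF₂).symm) e
end
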